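/- For every i ∈ I and z ∈ ℚ, the exponential exp(z·e_i) = Σ_{k≥0} z^k e_i^k / k! is a well-defined linear automorphism of V₁ (the sum is finite since e_i⁴ = 0), and it acts on the basis by: exp(z·e_i) X_α = Σ_{0 ≤ k ≤ p_{i,α}} ((q_{i,α}+k)!/(q_{i,α}!·k!))·z^k·X_{α+kα_i} for every root α ≠ −α_i (with the convention p_{i,α_i} = q_{i,α_i} = 0); exp(z·e_i) X_{−α_i} = X_{−α_i} + z·t_i + z²·X_{α_i}; and exp(z·e_i) t_j = t_j + |⟨α_j∨, α_i⟩|·z·X_{α_i} for every j ∈ I. Analogously, exp(z·f_i) X_α = Σ_{0 ≤ k ≤ q_{i,α}} ((p_{i,α}+k)!/(p_{i,α}!·k!))·z^k·X_{α−kα_i} for every root α ≠ α_i (with the convention p_{i,−α_i} = q_{i,−α_i} = 0); exp(z·f_i) X_{α_i} = X_{α_i} + z·t_i + z²·X_{−α_i}; and exp(z·f_i) t_j = t_j + |⟨α_j∨, α_i⟩|·z·X_{−α_i} for every j ∈ I. -/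

import Mathlib

open scoped RealInnerProductSpace

/-- A finite, reduced, irreducible, crystallographic root system `R` spanning a
finite-dimensional real inner product space `E`, together with a base of simple
roots indexed by `I`, the integral Cartan pairing `pair`, and for each simple
root `αᵢ` and each root `α` not proportional to `αᵢ` the chain lengths
`p i α`, `q i α` (largest `n ≥ 0` with `α + n αᵢ`, resp. `α - n αᵢ`, a root). -/
structure RootSystemData (E : Type) [NormedAddCommGroup E] [InnerProductSpace ℝ E]
    [FiniteDimensional ℝ E] (I : Type) [Fintype I] : Type where
  R : Set E
  finite : R.Finite
  zero_not_mem : (0 : E) ∉ R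
  spans : Submodule.span ℝ R = ⊤
  neg_mem : ∀ α ∈ R, -α ∈ R
  reduced : ∀ α ∈ R, ∀ r : ℝ, r • α ∈ R → r = 1 ∨ r = -1
  pair : E → E → ℤ
  pair_def : ∀ α ∈ R, ∀ β ∈ R, (pair α β : ℝ) * ⟪α, α⟫ = 2 * ⟪α, β⟫
  reflect_mem : ∀ α ∈ R, ∀ β ∈ R, β - (pair α β : ℝ) • α ∈ R
  irreducible : ∀ R₁ R₂ : Set E, R = R₁ ∪ R₂ →
    (∀ α ∈ R₁, ∀ β ∈ R₂, ⟪α, β⟫ = 0) → R₁ = ∅ ∨ R₂ = ∅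
  simple : I → E
  simple_mem : ∀ i, simple i ∈ R
  simple_indep : LinearIndependent ℝ simple
  simple_gen : ∀ α ∈ R,
    (∃ c : I → ℕ, α = ∑ i, (c i : ℝ) • simple i) ∨
    (∃ c : I → ℕ, α = -(∑ i, (c i : ℝ) • simple i))
  p : I → E → ℕ
  q : I → E → ℕ
  p_mem : ∀ i, ∀ α ∈ R, (∀ r : ℝ, α ≠ r • simple i) →
    ∀ k : ℕ, k ≤ p i α → α + (k : ℝ) • simple i ∈ R
  p_max : ∀ i, ∀ α ∈ R, (∀ r : ℝ, α ≠ r • simple i) →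
    α + ((p i α : ℝ) + 1) • simple i ∉ R
  q_mem : ∀ i, ∀ α ∈ R, (∀ r : ℝ, α ≠ r • simple i) →
    ∀ k : ℕ, k ≤ q i α → α - (k : ℝ) • simple i ∈ R
  q_max : ∀ i, ∀ α ∈ R, (∀ r : ℝ, α ≠ r • simple i) →
    α - ((q i α : ℝ) + 1) • simple i ∉ R

noncomputable section

variable {E : Type} [NormedAddCommGroup E] [InnerProductSpace ℝ E]
  [FiniteDimensional ℝ E] {I : Type} [Fintype I]

/-- The `ℚ`-vector space `V₁` with basis `{X_α : α ∈ R} ∪ {t_i : i ∈ I}`. -/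
abbrev V1 (D : RootSystemData E I) : Type := ({x : E // x ∈ D.R} ⊕ I) →₀ ℚ

/-- The basis vector `X_α` of `V₁`, for a root `α`. -/
def X1 (D : RootSystemData E I) (a : {x : E // x ∈ D.R}) : V1 D :=
  Finsupp.single (Sum.inl a) 1

/-- The basis vector `t_j` of `V₁`, for `j ∈ I`. -/
def t1 (D : RootSystemData E I) (j : I) : V1 D :=
  Finsupp.single (Sum.inr j) 1

open Classical in
/-- The operator `e_i` on `V₁`: `e_i X_α = (q_{i,α}+1) X_{α+αᵢ}` if `α+αᵢ ∈ R`,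
`e_i X_{-αᵢ} = tᵢ`, `e_i X_α = 0` otherwise, and `e_i t_j = |⟨αⱼ∨,αᵢ⟩| X_{αᵢ}`. -/
def eop (D : RootSystemData E I) (i : I) : V1 D →ₗ[ℚ] V1 D :=
  Finsupp.lift (V1 D) ℚ _ fun b =>
    match b with
    | Sum.inl a =>
        if h : (a : E) + D.simple i ∈ D.R then
          ((D.q i (a : E) : ℚ) + 1) • X1 D ⟨(a : E) + D.simple i, h⟩
        else if (a : E) = -(D.simple i) then t1 D i
        else 0
    | Sum.inr j =>
        ((|D.pair (D.simple j) (D.simple i)| : ℤ) : ℚ) •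
          X1 D ⟨D.simple i, D.simple_mem i⟩

open Classical in
/-- The operator `f_i` on `V₁`: `f_i X_α = (p_{i,α}+1) X_{α-αᵢ}` if `α-αᵢ ∈ R`,
`f_i X_{αᵢ} = tᵢ`, `f_i X_α = 0` otherwise, and `f_i t_j = |⟨αⱼ∨,αᵢ⟩| X_{-αᵢ}`. -/
def fop (D : RootSystemData E I) (i : I) : V1 D →ₗ[ℚ] V1 D :=
  Finsupp.lift (V1 D) ℚ _ fun b =>
    match b with
    | Sum.inl a =>
        if h : (a : E) - D.simple i ∈ D.R then
          ((D.p i (a : E) : ℚ) + 1) • X1 D ⟨(a : E) - D.simple i, h⟩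
        else if (a : E) = D.simple i then t1 D i
        else 0
    | Sum.inr j =>
        ((|D.pair (D.simple j) (D.simple i)| : ℤ) : ℚ) •
          X1 D ⟨-(D.simple i), D.neg_mem (D.simple i) (D.simple_mem i)⟩

/-- The exponential `exp(z·e_i) = ∑_{k≥0} z^k e_i^k / k!` on `V₁`; the sum is
finite since `e_i⁴ = 0`. -/
def expE (D : RootSystemData E I) (i : I) (z : ℚ) : V1 D →ₗ[ℚ] V1 D :=
  ∑ k ∈ Finset.range 4, (z ^ k / (Nat.factorial k : ℚ)) • eop D i ^ k

/-- The exponential `exp(z·f_i) = ∑_{k≥0} z^k f_i^k / k!` on `V₁`; the sum is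
finite since `f_i⁴ = 0`. -/
def expF (D : RootSystemData E I) (i : I) (z : ℚ) : V1 D →ₗ[ℚ] V1 D :=
  ∑ k ∈ Finset.range 4, (z ^ k / (Nat.factorial k : ℚ)) • fop D i ^ k

/-!
Along the `αᵢ`-string through a root `α` not proportional to `αᵢ`, `e_i` sends `X_{α+kαᵢ}` to
`(q_{i,α}+k+1) X_{α+(k+1)αᵢ}`, so `e_iᵏ X_α = (q+1)(q+2)⋯(q+k) X_{α+kαᵢ}`; dividing by `k!` gives
the binomial coefficients. Along the string `⟨αᵢ∨, ·⟩` grows by `2` at each step, while strict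
Cauchy–Schwarz keeps it in `[-3, 3]`; hence `p_{i,α} ≤ 3` and `e_i⁴ = 0`, so `exp(z·e_i)` is the
exponential of a nilpotent endomorphism and is invertible. The formulas for `f_i` are those for
`e_i` with respect to the opposite base `-Δ`, which exchanges `p` and `q`.
-/

open Finset

section InnerProduct

variable {F : Type*} [NormedAddCommGroup F] [InnerProductSpace ℝ F]

theorem real_inner_mul_inner_self_lt_of_forall_ne_smul {x y : F} (hx : x ≠ 0)
    (hy : ∀ r : ℝ, y ≠ r • x) : ⟪x, y⟫ * ⟪x, y⟫ < ⟪x, x⟫ * ⟪y, y⟫ := by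
  refine (real_inner_mul_inner_self_le x y).lt_of_ne fun h => ?_
  have hnorm : ‖⟪x, y⟫‖ = ‖x‖ * ‖y‖ := by
    rw [← sq_eq_sq₀ (norm_nonneg _) (by positivity), mul_pow, Real.norm_eq_abs, sq_abs, sq, h,
      real_inner_self_eq_norm_sq, real_inner_self_eq_norm_sq]
  obtain ⟨r, -, hr⟩ := (norm_inner_eq_norm_iff hx (by simpa using hy 0)).1 hnorm
  exact hy r hr

end InnerProduct

theorem add_smul_ne_smul {M : Type*} [AddCommGroup M] [Module ℝ M] {x y : M}
    (hy : ∀ r : ℝ, y ≠ r • x) (c r : ℝ) : y + c • x ≠ r • x := fun h =>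
  hy (r - c) (by rw [sub_smul, ← h, add_sub_cancel_right])

theorem forall_ne_smul_of_forall_ne_smul_neg {M : Type*} [AddCommGroup M] [Module ℝ M] {x y : M}
    (hy : ∀ r : ℝ, y ≠ r • -x) (r : ℝ) : y ≠ r • x := by
  simpa using hy (-r)

namespace RootSystemData

variable (D : RootSystemData E I) (i : I)

theorem ne_zero_of_mem {α : E} (hα : α ∈ D.R) : α ≠ 0 := fun h => D.zero_not_mem (h ▸ hα)

theorem inner_simple_self_pos : 0 < ⟪D.simple i, D.simple i⟫ :=
  real_inner_self_pos.2 (D.ne_zero_of_mem (D.simple_mem i))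

theorem pair_simple_self : D.pair (D.simple i) (D.simple i) = 2 := by
  have h := D.pair_def _ (D.simple_mem i) _ (D.simple_mem i)
  exact_mod_cast mul_right_cancel₀ (D.inner_simple_self_pos i).ne' h

theorem simple_add_simple_not_mem : D.simple i + D.simple i ∉ D.R := fun h => by
  rcases D.reduced _ (D.simple_mem i) 2 (by rwa [two_smul]) with h2 | h2 <;> norm_num at h2

theorem simple_ne_neg_simple : D.simple i ≠ -D.simple i :=
  fun h => D.ne_zero_of_mem (D.simple_mem i) (by linear_combination (norm := module) (2⁻¹ : ℝ) • h)

theorem eq_simple_or_eq_neg_simple {α : E} (hα : α ∈ D.R) (h : ¬∀ r : ℝ, α ≠ r • D.simple i) :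
    α = D.simple i ∨ α = -D.simple i := by
  obtain ⟨r, rfl⟩ := not_forall_not.1 h
  rcases D.reduced _ (D.simple_mem i) r hα with rfl | rfl <;> simp

theorem abs_pair_simple_le_three {γ : E} (hγ : γ ∈ D.R) (hnp : ∀ r : ℝ, γ ≠ r • D.simple i) :
    |D.pair (D.simple i) γ| ≤ 3 := by
  set s := D.simple i
  set m := D.pair s γ
  set n := D.pair γ s
  have hm : (m : ℝ) * ⟪s, s⟫ = 2 * ⟪s, γ⟫ := D.pair_def s (D.simple_mem i) γ hγ
  have hn : (n : ℝ) * ⟪γ, γ⟫ = 2 * ⟪s, γ⟫ := by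
    rw [D.pair_def γ hγ s (D.simple_mem i), real_inner_comm]
  have hss := D.inner_simple_self_pos i
  have hγγ : 0 < ⟪γ, γ⟫ := real_inner_self_pos.2 (D.ne_zero_of_mem hγ)
  have hcs := real_inner_mul_inner_self_lt_of_forall_ne_smul (D.ne_zero_of_mem (D.simple_mem i)) hnp
  have hprod : (m * n : ℝ) * (⟪s, s⟫ * ⟪γ, γ⟫) = 4 * (⟪s, γ⟫ * ⟪s, γ⟫) := by
    linear_combination (n * ⟪γ, γ⟫) * hm + (2 * ⟪s, γ⟫) * hn
  have hlt : m * n < 4 := by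
    have : (m * n : ℝ) < 4 := by nlinarith [mul_pos hss hγγ]
    exact_mod_cast this
  have hnonneg : 0 ≤ m * n := by
    have : (0 : ℝ) ≤ m * n := by nlinarith [mul_self_nonneg ⟪s, γ⟫, mul_pos hss hγγ]
    exact_mod_cast this
  rcases eq_or_ne n 0 with hn0 | hn0
  · have : (m : ℝ) = 0 := by
      rw [hn0, Int.cast_zero, zero_mul] at hn
      nlinarith
    simp [show m = 0 by exact_mod_cast this]
  · calc |m| ≤ |m| * |n| := le_mul_of_one_le_right (abs_nonneg m) (Int.one_le_abs hn0)
      _ = m * n := by rw [← abs_mul, abs_of_nonneg hnonneg]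
      _ ≤ 3 := by omega

theorem pair_simple_add_smul {α : E} (hα : α ∈ D.R) {c : ℝ} (hc : α + c • D.simple i ∈ D.R) :
    (D.pair (D.simple i) (α + c • D.simple i) : ℝ) = D.pair (D.simple i) α + 2 * c := by
  apply mul_right_cancel₀ (D.inner_simple_self_pos i).ne'
  rw [D.pair_def _ (D.simple_mem i) _ hc, inner_add_right, real_inner_smul_right, add_mul,
    D.pair_def _ (D.simple_mem i) _ hα]
  ring

theorem q_eq_of_chain {α : E} (hα : α ∈ D.R) (hnp : ∀ r : ℝ, α ≠ r • D.simple i) {n : ℕ}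
    (hmem : ∀ k : ℕ, k ≤ n → α - (k : ℝ) • D.simple i ∈ D.R)
    (hmax : α - ((n : ℝ) + 1) • D.simple i ∉ D.R) : D.q i α = n := by
  refine le_antisymm (not_lt.1 fun h => hmax ?_) (not_lt.1 fun h => D.q_max i α hα hnp ?_)
  · exact_mod_cast D.q_mem i α hα hnp (n + 1) h
  · exact_mod_cast hmem (D.q i α + 1) h

theorem q_add_smul {α : E} (hα : α ∈ D.R) (hnp : ∀ r : ℝ, α ≠ r • D.simple i) {k : ℕ}
    (hk : k ≤ D.p i α) : D.q i (α + (k : ℝ) • D.simple i) = D.q i α + k := by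
  refine D.q_eq_of_chain i (D.p_mem i α hα hnp k hk) (add_smul_ne_smul hnp k) (fun m hm => ?_) ?_
  · rcases le_total m k with h | h
    · obtain ⟨d, rfl⟩ := Nat.exists_eq_add_of_le h
      convert D.p_mem i α hα hnp d (by omega) using 1
      push_cast; module
    · obtain ⟨d, rfl⟩ := Nat.exists_eq_add_of_le h
      convert D.q_mem i α hα hnp d (by omega) using 1
      push_cast; module
  · convert D.q_max i α hα hnp using 2
    push_cast; module

theorem p_le_three {α : E} (hα : α ∈ D.R) (hnp : ∀ r : ℝ, α ≠ r • D.simple i) :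
    D.p i α ≤ 3 := by
  by_contra! h
  have h4 : α + (4 : ℝ) • D.simple i ∈ D.R := by exact_mod_cast D.p_mem i α hα hnp 4 h
  have hb0 := abs_le.1 (D.abs_pair_simple_le_three i hα hnp)
  have hb4 := abs_le.1 (D.abs_pair_simple_le_three i h4 (add_smul_ne_smul hnp _))
  have hshift : D.pair (D.simple i) (α + (4 : ℝ) • D.simple i) = D.pair (D.simple i) α + 8 := by
    have := D.pair_simple_add_smul i hα h4
    exact Int.cast_injective (α := ℝ) (by push_cast; linarith)
  omega

theorem X1_congr {x y : E} (hx : x ∈ D.R) (hy : y ∈ D.R) (h : x = y) :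
    X1 D ⟨x, hx⟩ = X1 D ⟨y, hy⟩ := by
  subst h; rfl

open Classical in
theorem eop_X1 (a : {x : E // x ∈ D.R}) :
    eop D i (X1 D a) =
      if h : (a : E) + D.simple i ∈ D.R then
        ((D.q i (a : E) : ℚ) + 1) • X1 D ⟨(a : E) + D.simple i, h⟩
      else if (a : E) = -(D.simple i) then t1 D i
      else 0 := by
  simp [eop, X1]

theorem eop_t1 (j : I) :
    eop D i (t1 D j) =
      ((|D.pair (D.simple j) (D.simple i)| : ℤ) : ℚ) • X1 D ⟨D.simple i, D.simple_mem i⟩ := by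
  simp [eop, t1]

theorem eop_X_of_add_mem {α : E} (hα : α ∈ D.R) (h : α + D.simple i ∈ D.R) :
    eop D i (X1 D ⟨α, hα⟩) = ((D.q i α : ℚ) + 1) • X1 D ⟨α + D.simple i, h⟩ := by
  rw [eop_X1, dif_pos h]

theorem eop_X_of_add_not_mem {α : E} (hα : α ∈ D.R) (h : α + D.simple i ∉ D.R)
    (hne : α ≠ -D.simple i) : eop D i (X1 D ⟨α, hα⟩) = 0 := by
  rw [eop_X1, dif_neg h, if_neg hne]

theorem eop_X_simple : eop D i (X1 D ⟨D.simple i, D.simple_mem i⟩) = 0 :=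
  D.eop_X_of_add_not_mem i _ (D.simple_add_simple_not_mem i) (D.simple_ne_neg_simple i)

theorem eop_X_neg_simple :
    eop D i (X1 D ⟨-D.simple i, D.neg_mem _ (D.simple_mem i)⟩) = t1 D i := by
  rw [eop_X1, dif_neg (by rw [neg_add_cancel]; exact D.zero_not_mem), if_pos rfl]

theorem eop_t1_self : eop D i (t1 D i) = (2 : ℚ) • X1 D ⟨D.simple i, D.simple_mem i⟩ := by
  rw [eop_t1, pair_simple_self]
  norm_num

theorem eop_pow_X_of_le {α : E} (hα : α ∈ D.R) (hnp : ∀ r : ℝ, α ≠ r • D.simple i) {k : ℕ}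
    (hk : k ≤ D.p i α) :
    (eop D i ^ k) (X1 D ⟨α, hα⟩) =
      ((D.q i α + 1).ascFactorial k : ℚ) •
        X1 D ⟨α + (k : ℝ) • D.simple i, D.p_mem i α hα hnp k hk⟩ := by
  induction k with
  | zero => simp
  | succ k ih =>
    have hk' : k ≤ D.p i α := by omega
    have hstep : α + (k : ℝ) • D.simple i + D.simple i = α + ((k + 1 : ℕ) : ℝ) • D.simple i := by
      push_cast; module
    rw [pow_succ', Module.End.mul_apply, ih hk', map_smul,
      D.eop_X_of_add_mem i _ (hstep ▸ D.p_mem i α hα hnp (k + 1) hk), D.q_add_smul i hα hnp hk',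
      smul_smul, D.X1_congr _ (D.p_mem i α hα hnp (k + 1) hk) hstep, Nat.ascFactorial_succ]
    push_cast; ring_nf

theorem eop_pow_X_of_lt {α : E} (hα : α ∈ D.R) (hnp : ∀ r : ℝ, α ≠ r • D.simple i) {k : ℕ}
    (hk : D.p i α < k) : (eop D i ^ k) (X1 D ⟨α, hα⟩) = 0 := by
  obtain ⟨m, rfl⟩ := Nat.exists_eq_add_of_lt hk
  have hmax : α + (D.p i α : ℝ) • D.simple i + D.simple i ∉ D.R := by
    convert D.p_max i α hα hnp using 2; module
  have hne : α + (D.p i α : ℝ) • D.simple i ≠ -D.simple i := by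
    simpa using add_smul_ne_smul hnp (D.p i α) (-1)
  rw [show D.p i α + m + 1 = m + (D.p i α + 1) by ring, pow_add, Module.End.mul_apply, pow_succ',
    Module.End.mul_apply, D.eop_pow_X_of_le i hα hnp le_rfl, map_smul,
    D.eop_X_of_add_not_mem i _ hmax hne, smul_zero, map_zero]

theorem eop_pow_four : eop D i ^ 4 = 0 := by
  refine Finsupp.basisSingleOne.ext fun b => ?_
  rw [LinearMap.zero_apply, Finsupp.coe_basisSingleOne]
  rcases b with ⟨α, hα⟩ | j
  · change (eop D i ^ 4) (X1 D ⟨α, hα⟩) = 0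
    by_cases hnp : ∀ r : ℝ, α ≠ r • D.simple i
    · exact D.eop_pow_X_of_lt i hα hnp (by have := D.p_le_three i hα hnp; omega)
    · rcases D.eq_simple_or_eq_neg_simple i hα hnp with rfl | rfl
      · simp [Module.End.pow_apply, eop_X_simple]
      · simp [Module.End.pow_apply, eop_X_neg_simple, eop_t1_self, eop_X_simple]
  · change (eop D i ^ 4) (t1 D j) = 0
    simp [Module.End.pow_apply, eop_t1, eop_X_simple]

theorem isNilpotent_eop : IsNilpotent (eop D i) := ⟨4, D.eop_pow_four i⟩

theorem expE_eq_exp (z : ℚ) : expE D i z = IsNilpotent.exp (z • eop D i) := by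
  rw [IsNilpotent.exp_eq_sum (k := 4) (by rw [smul_pow, eop_pow_four, smul_zero]), expE]
  refine sum_congr rfl fun k _ => ?_
  rw [smul_pow, smul_smul, div_eq_inv_mul]

theorem expE_bijective (z : ℚ) : Function.Bijective (expE D i z) := by
  rw [expE_eq_exp, ← Module.End.isUnit_iff]
  exact IsNilpotent.isUnit_exp ((D.isNilpotent_eop i).smul z)

theorem expE_apply (z : ℚ) (v : V1 D) :
    expE D i z v = v + z • eop D i v + (z ^ 2 / 2) • eop D i (eop D i v) +
      (z ^ 3 / 6) • eop D i (eop D i (eop D i v)) := by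
  simp [expE, sum_range_succ, Module.End.pow_apply, Nat.factorial]

open Classical in
theorem expE_X_of_forall_ne_smul (z : ℚ) {α : E} (hα : α ∈ D.R)
    (hnp : ∀ r : ℝ, α ≠ r • D.simple i) :
    expE D i z (X1 D ⟨α, hα⟩) =
      ∑ k ∈ range (D.p i α + 1),
        ((((D.q i α + k).factorial / ((D.q i α).factorial * k.factorial) : ℕ) : ℚ) * z ^ k) •
          (if h : α + (k : ℝ) • D.simple i ∈ D.R then X1 D ⟨α + (k : ℝ) • D.simple i, h⟩
            else 0) := by
  have hp := D.p_le_three i hα hnp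
  simp only [expE, LinearMap.sum_apply, LinearMap.smul_apply]
  rw [← sum_subset (range_subset_range.2 (by omega : D.p i α + 1 ≤ 4))]
  · refine sum_congr rfl fun k hk => ?_
    have hk : k ≤ D.p i α := Nat.lt_succ_iff.1 (mem_range.1 hk)
    rw [D.eop_pow_X_of_le i hα hnp hk, dif_pos (D.p_mem i α hα hnp k hk), smul_smul,
      ← Nat.add_choose, Nat.ascFactorial_eq_factorial_mul_choose]
    push_cast
    field_simp
  · intro k _ hk
    rw [D.eop_pow_X_of_lt i hα hnp (by simpa using hk), smul_zero]

theorem expE_X_simple (z : ℚ) :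
    expE D i z (X1 D ⟨D.simple i, D.simple_mem i⟩) = X1 D ⟨D.simple i, D.simple_mem i⟩ := by
  simp [expE_apply, eop_X_simple]

theorem expE_X_neg_simple (z : ℚ) :
    expE D i z (X1 D ⟨-D.simple i, D.neg_mem _ (D.simple_mem i)⟩) =
      X1 D ⟨-D.simple i, D.neg_mem _ (D.simple_mem i)⟩ + z • t1 D i +
        z ^ 2 • X1 D ⟨D.simple i, D.simple_mem i⟩ := by
  rw [expE_apply, eop_X_neg_simple, eop_t1_self, map_smul, eop_X_simple]
  module

theorem expE_t1 (z : ℚ) (j : I) :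
    expE D i z (t1 D j) =
      t1 D j + (((|D.pair (D.simple j) (D.simple i)| : ℤ) : ℚ) * z) •
        X1 D ⟨D.simple i, D.simple_mem i⟩ := by
  rw [expE_apply, eop_t1, map_smul, eop_X_simple, smul_zero, map_zero]
  module

-- `pair` is read at negated arguments so that the pairing of the new simple roots is literally
-- that of the old ones.
def negBase : RootSystemData E I where
  R := D.R
  finite := D.finite
  zero_not_mem := D.zero_not_mem
  spans := D.spans
  neg_mem := D.neg_mem
  reduced := D.reduced
  pair α β := D.pair (-α) (-β)
  pair_def α hα β hβ := by
    simpa using D.pair_def (-α) (D.neg_mem α hα) (-β) (D.neg_mem β hβ)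
  reflect_mem α hα β hβ := by
    simpa [neg_add_eq_sub] using
      D.neg_mem _ (D.reflect_mem (-α) (D.neg_mem α hα) (-β) (D.neg_mem β hβ))
  irreducible := D.irreducible
  simple j := -D.simple j
  simple_mem j := D.neg_mem _ (D.simple_mem j)
  simple_indep := D.simple_indep.map' (LinearEquiv.neg ℝ).toLinearMap
    (LinearMap.ker_eq_bot_of_injective (LinearEquiv.neg ℝ).injective)
  simple_gen α hα := by
    rcases D.simple_gen α hα with ⟨c, rfl⟩ | ⟨c, rfl⟩
    · exact Or.inr ⟨c, by simp⟩
    · exact Or.inl ⟨c, by simp⟩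
  p := D.q
  q := D.p
  p_mem i α hα hnp k hk := by
    simpa [sub_eq_add_neg] using D.q_mem i α hα (forall_ne_smul_of_forall_ne_smul_neg hnp) k hk
  p_max i α hα hnp := by
    simpa [sub_eq_add_neg] using D.q_max i α hα (forall_ne_smul_of_forall_ne_smul_neg hnp)
  q_mem i α hα hnp k hk := by
    simpa using D.p_mem i α hα (forall_ne_smul_of_forall_ne_smul_neg hnp) k hk
  q_max i α hα hnp := by
    simpa using D.p_max i α hα (forall_ne_smul_of_forall_ne_smul_neg hnp)

open Classical in
theorem fop_X1 (a : {x : E // x ∈ D.R}) :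
    fop D i (X1 D a) =
      if h : (a : E) - D.simple i ∈ D.R then
        ((D.p i (a : E) : ℚ) + 1) • X1 D ⟨(a : E) - D.simple i, h⟩
      else if (a : E) = D.simple i then t1 D i
      else 0 := by
  simp [fop, X1]

theorem fop_t1 (j : I) :
    fop D i (t1 D j) =
      ((|D.pair (D.simple j) (D.simple i)| : ℤ) : ℚ) •
        X1 D ⟨-D.simple i, D.neg_mem _ (D.simple_mem i)⟩ := by
  simp [fop, t1]

theorem fop_eq_eop_negBase : fop D i = eop D.negBase i := by
  refine Finsupp.basisSingleOne.ext fun b => ?_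
  rcases b with ⟨α, hα⟩ | j
  · change fop D i (X1 D ⟨α, hα⟩) = eop D.negBase i (X1 D.negBase ⟨α, hα⟩)
    rw [fop_X1, eop_X1]
    have hsub : α + D.negBase.simple i = α - D.simple i := (sub_eq_add_neg _ _).symm
    by_cases h : α - D.simple i ∈ D.R
    · rw [dif_pos h, dif_pos (hsub ▸ h)]
      exact congrArg _ (D.X1_congr _ _ hsub.symm)
    · rw [dif_neg h, dif_neg (hsub ▸ h)]
      by_cases h2 : α = D.simple i
      · rw [if_pos h2, if_pos (by simpa [negBase] using h2)]
        rfl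
      · rw [if_neg h2, if_neg (by simpa [negBase] using h2)]
        rfl
  · change fop D i (t1 D j) = eop D.negBase i (t1 D.negBase j)
    rw [fop_t1, eop_t1]
    simp only [negBase, neg_neg]
    rfl

theorem expF_eq_expE_negBase (z : ℚ) : expF D i z = expE D.negBase i z := by
  rw [expF, expE, fop_eq_eop_negBase]
  rfl

theorem expF_bijective (z : ℚ) : Function.Bijective (expF D i z) := by
  rw [expF_eq_expE_negBase]
  exact D.negBase.expE_bijective i z

open Classical in
theorem expF_X_of_forall_ne_smul (z : ℚ) {α : E} (hα : α ∈ D.R)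
    (hnp : ∀ r : ℝ, α ≠ r • D.simple i) :
    expF D i z (X1 D ⟨α, hα⟩) =
      ∑ k ∈ range (D.q i α + 1),
        ((((D.p i α + k).factorial / ((D.p i α).factorial * k.factorial) : ℕ) : ℚ) * z ^ k) •
          (if h : α - (k : ℝ) • D.simple i ∈ D.R then X1 D ⟨α - (k : ℝ) • D.simple i, h⟩
            else 0) := by
  have hnp' : ∀ r : ℝ, α ≠ r • D.negBase.simple i := fun r => by
    simpa [negBase] using hnp (-r)
  rw [expF_eq_expE_negBase]
  refine (D.negBase.expE_X_of_forall_ne_smul i z hα hnp').trans (sum_congr rfl fun k _ => ?_)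
  have hsub : α + (k : ℝ) • D.negBase.simple i = α - (k : ℝ) • D.simple i := by
    simp [negBase, sub_eq_add_neg]
  congr 1
  split_ifs with h₁ h₂ h₂
  · exact D.X1_congr _ _ hsub
  · exact absurd (hsub ▸ h₁) h₂
  · exact absurd (hsub ▸ h₂) h₁
  · rfl

theorem expF_X_neg_simple (z : ℚ) :
    expF D i z (X1 D ⟨-D.simple i, D.neg_mem _ (D.simple_mem i)⟩) =
      X1 D ⟨-D.simple i, D.neg_mem _ (D.simple_mem i)⟩ := by
  rw [expF_eq_expE_negBase]
  exact D.negBase.expE_X_simple i z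

theorem expF_X_simple (z : ℚ) :
    expF D i z (X1 D ⟨D.simple i, D.simple_mem i⟩) =
      X1 D ⟨D.simple i, D.simple_mem i⟩ + z • t1 D i +
        z ^ 2 • X1 D ⟨-D.simple i, D.neg_mem _ (D.simple_mem i)⟩ := by
  rw [expF_eq_expE_negBase, D.X1_congr _ (D.negBase.neg_mem _ (D.negBase.simple_mem i))
    (neg_neg _).symm]
  exact D.negBase.expE_X_neg_simple i z

theorem expF_t1 (z : ℚ) (j : I) :
    expF D i z (t1 D j) =
      t1 D j + (((|D.pair (D.simple j) (D.simple i)| : ℤ) : ℚ) * z) •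
        X1 D ⟨-D.simple i, D.neg_mem _ (D.simple_mem i)⟩ := by
  have hpair : D.negBase.pair (D.negBase.simple j) (D.negBase.simple i) =
      D.pair (D.simple j) (D.simple i) := by
    simp [negBase]
  rw [expF_eq_expE_negBase, ← hpair]
  exact D.negBase.expE_t1 i z j

end RootSystemData

open Classical in
/-- `exp(z·e_i)` and `exp(z·f_i)` are linear automorphisms of `V₁` and act on
the basis by the explicit formulas of Lusztig's 2.2. -/
theorem stmt18 {E : Type} [NormedAddCommGroup E] [InnerProductSpace ℝ E]
    [FiniteDimensional ℝ E] {I : Type} [Fintype I]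
    (D : RootSystemData E I) (i : I) (z : ℚ) :
    Function.Bijective (expE D i z) ∧
    Function.Bijective (expF D i z) ∧
    (∀ a : {x : E // x ∈ D.R}, (∀ r : ℝ, (a : E) ≠ r • D.simple i) →
      expE D i z (X1 D a)
        = ∑ k ∈ Finset.range (D.p i (a : E) + 1),
            ((((D.q i (a : E) + k).factorial /
                ((D.q i (a : E)).factorial * k.factorial) : ℕ) : ℚ) * z ^ k) •
              (if h : (a : E) + (k : ℝ) • D.simple i ∈ D.R then
                X1 D ⟨(a : E) + (k : ℝ) • D.simple i, h⟩ else 0)) ∧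
    (expE D i z (X1 D ⟨D.simple i, D.simple_mem i⟩)
        = X1 D ⟨D.simple i, D.simple_mem i⟩) ∧
    (expE D i z (X1 D ⟨-(D.simple i), D.neg_mem (D.simple i) (D.simple_mem i)⟩)
        = X1 D ⟨-(D.simple i), D.neg_mem (D.simple i) (D.simple_mem i)⟩
          + z • t1 D i + z ^ 2 • X1 D ⟨D.simple i, D.simple_mem i⟩) ∧
    (∀ j : I, expE D i z (t1 D j)
        = t1 D j + (((|D.pair (D.simple j) (D.simple i)| : ℤ) : ℚ) * z) •
            X1 D ⟨D.simple i, D.simple_mem i⟩) ∧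
    (∀ a : {x : E // x ∈ D.R}, (∀ r : ℝ, (a : E) ≠ r • D.simple i) →
      expF D i z (X1 D a)
        = ∑ k ∈ Finset.range (D.q i (a : E) + 1),
            ((((D.p i (a : E) + k).factorial /
                ((D.p i (a : E)).factorial * k.factorial) : ℕ) : ℚ) * z ^ k) •
              (if h : (a : E) - (k : ℝ) • D.simple i ∈ D.R then
                X1 D ⟨(a : E) - (k : ℝ) • D.simple i, h⟩ else 0)) ∧
    (expF D i z (X1 D ⟨-(D.simple i), D.neg_mem (D.simple i) (D.simple_mem i)⟩)
        = X1 D ⟨-(D.simple i), D.neg_mem (D.simple i) (D.simple_mem i)⟩) ∧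
    (expF D i z (X1 D ⟨D.simple i, D.simple_mem i⟩)
        = X1 D ⟨D.simple i, D.simple_mem i⟩
          + z • t1 D i
          + z ^ 2 • X1 D ⟨-(D.simple i), D.neg_mem (D.simple i) (D.simple_mem i)⟩) ∧
    (∀ j : I, expF D i z (t1 D j)
        = t1 D j + (((|D.pair (D.simple j) (D.simple i)| : ℤ) : ℚ) * z) •
            X1 D ⟨-(D.simple i), D.neg_mem (D.simple i) (D.simple_mem i)⟩) := by
  exact ⟨D.expE_bijective i z, D.expF_bijective i z,
    fun a => D.expE_X_of_forall_ne_smul i z a.2, D.expE_X_simple i z, D.expE_X_neg_simple i z,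
    D.expE_t1 i z, fun a => D.expF_X_of_forall_ne_smul i z a.2, D.expF_X_neg_simple i z,
    D.expF_X_simple i z, D.expF_t1 i z⟩
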